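/- (Case B, large endpoint distance.) Let c be a metric on V, let σ > 0, and let x be a feasible solution of the path-variant Held-Karp relaxation with respect to s and t satisfying c(s,t) ≥ (1/3 + σ)·c(x). Then there exists a Hamiltonian path from s to t in the complete graph on V whose cost is at most (5/3 − σ)·c(x). -/

import Mathlib

/-!
The Held–Karp constraints give `x(E) = n - 1` and the subtour inequalities
`x(E(B)) ≤ |B| - 1`, so `x` lies in the spanning tree polytope and the spanning tree `T` found by
Kruskal's algorithm costs at most `c(x)`. Growing `T` leaf by leaf, a Hamiltonian `s`–`t` path of
cost at most `2 c(T) - c(s, t)` is maintained: by the triangle inequality, inserting a new leaf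
`ℓ` next to its neighbour `p` costs at most `2 c(p, ℓ)`. Hence the path costs at most
`2 c(x) - c(s, t) ≤ (5/3 - σ) c(x)`.
-/

open Finset

namespace TSPPath

noncomputable section
open scoped Classical

/-- Edge set of the complete graph on `Fin n`: all unordered pairs of distinct vertices. -/
def Edges (n : ℕ) : Finset (Sym2 (Fin n)) := Finset.univ.filter (fun e => ¬ e.IsDiag)

/-- `cutSet n S` is `δ(S)`: the edges with exactly one endpoint in `S`. -/
def cutSet (n : ℕ) (S : Finset (Fin n)) : Finset (Sym2 (Fin n)) :=
  (Edges n).filter (fun e => ∃ u v : Fin n, e = s(u, v) ∧ u ∈ S ∧ v ∉ S)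

/-- `inSet n S` is `E(S)`: the edges with both endpoints in `S`. -/
def inSet (n : ℕ) (S : Finset (Fin n)) : Finset (Sym2 (Fin n)) :=
  (Edges n).filter (fun e => ∀ v ∈ e, v ∈ S)

/-- Degree of a vertex in an edge set. -/
def deg (n : ℕ) (H : Finset (Sym2 (Fin n))) (v : Fin n) : ℕ :=
  (H.filter (fun e => v ∈ e)).card

/-- Degree of a vertex in an edge multiset (counting multiplicity). -/
def mdeg (n : ℕ) (L : Multiset (Sym2 (Fin n))) (v : Fin n) : ℕ :=
  (L.filter (fun e => v ∈ e)).card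

/-- Feasibility for the path-variant Held–Karp relaxation with endpoints `s, t`. -/
def HKPathFeasible (n : ℕ) (s t : Fin n) (x : Sym2 (Fin n) → ℝ) : Prop :=
  (∀ e, 0 ≤ x e) ∧
  (∑ e ∈ cutSet n {s}, x e = 1) ∧
  (∑ e ∈ cutSet n {t}, x e = 1) ∧
  (∀ v : Fin n, v ≠ s → v ≠ t → ∑ e ∈ cutSet n {v}, x e = 2) ∧
  (∀ S : Finset (Fin n), S.Nonempty → S ≠ Finset.univ →
      ((s ∈ S ∧ t ∉ S) ∨ (s ∉ S ∧ t ∈ S)) → 1 ≤ ∑ e ∈ cutSet n S, x e) ∧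
  (∀ S : Finset (Fin n), S.Nonempty → S ≠ Finset.univ →
      ¬((s ∈ S ∧ t ∉ S) ∨ (s ∉ S ∧ t ∈ S)) → 2 ≤ ∑ e ∈ cutSet n S, x e)

/-- `c` is a metric: nonnegative, symmetric, vanishing on the diagonal, triangle inequality. -/
def IsMetric (n : ℕ) (c : Fin n → Fin n → ℝ) : Prop :=
  (∀ u v, 0 ≤ c u v) ∧ (∀ u v, c u v = c v u) ∧ (∀ u, c u u = 0) ∧
  (∀ u v w, c u w ≤ c u v + c v w)

/-- Cost of an unordered edge (defined by symmetrization, which agrees with `c u v`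
whenever `c` is symmetric). -/
def ecost (n : ℕ) (c : Fin n → Fin n → ℝ) (e : Sym2 (Fin n)) : ℝ :=
  Sym2.lift ⟨fun u v => (c u v + c v u) / 2, by intro u v; ring⟩ e

/-- `c(x) = ∑_{e ∈ E} x_e c(e)`. -/
def xcost (n : ℕ) (c : Fin n → Fin n → ℝ) (x : Sym2 (Fin n) → ℝ) : ℝ :=
  ∑ e ∈ Edges n, x e * ecost n c e

/-- `c(F) = ∑_{e ∈ F} c(e)` for an edge set `F`. -/
def fcost (n : ℕ) (c : Fin n → Fin n → ℝ) (F : Finset (Sym2 (Fin n))) : ℝ :=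
  ∑ e ∈ F, ecost n c e

/-- `H` is (the edge set of) a spanning tree of the complete graph on `Fin n`. -/
def IsSpanningTree (n : ℕ) (H : Finset (Sym2 (Fin n))) : Prop :=
  H ⊆ Edges n ∧ (SimpleGraph.fromEdgeSet (H : Set (Sym2 (Fin n)))).Connected ∧
    H.card = n - 1

/-- The wrong-parity set of an edge set `H`: internal vertices of odd degree
together with the endpoints of even degree. -/
def wrongParity (n : ℕ) (s t : Fin n) (H : Finset (Sym2 (Fin n))) : Finset (Fin n) :=
  Finset.univ.filter (fun v =>
    if v = s ∨ v = t then Even (deg n H v) else Odd (deg n H v))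

/-- `M` is a perfect matching on the vertex set `T`: vertex-disjoint edges covering
exactly the vertices of `T`. -/
def IsPerfectMatchingOn (n : ℕ) (T : Finset (Fin n)) (M : Finset (Sym2 (Fin n))) : Prop :=
  M ⊆ Edges n ∧ (∀ v ∈ T, deg n M v = 1) ∧ (∀ v : Fin n, v ∉ T → deg n M v = 0)

/-- `J` is a `T`-join: exactly the vertices of `T` have odd degree in `J`. -/
def IsTJoin (n : ℕ) (T : Finset (Fin n)) (J : Finset (Sym2 (Fin n))) : Prop :=
  J ⊆ Edges n ∧ ∀ v : Fin n, Odd (deg n J v) ↔ v ∈ T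

/-- There is a Hamiltonian path from `s` to `t` in the complete graph on `Fin n`
of cost (w.r.t. the metric `c`) at most `B`. -/
def ExistsHamPath (n : ℕ) (s t : Fin n) (c : Fin n → Fin n → ℝ) (B : ℝ) : Prop :=
  ∃ p : (⊤ : SimpleGraph (Fin n)).Walk s t,
    p.IsHamiltonian ∧ (p.edges.map (ecost n c)).sum ≤ B

/-- Connectivity of the multigraph `(V, L)` (equivalently, of its support graph,
which must span all of `Fin n`). -/
def MConnected (n : ℕ) (L : Multiset (Sym2 (Fin n))) : Prop :=
  (SimpleGraph.fromEdgeSet {e | e ∈ L}).Connected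

/-- The multiset of edges traversed by the walk given by a vertex list `w`. -/
def walkEdges (n : ℕ) (w : List (Fin n)) : Multiset (Sym2 (Fin n)) :=
  ((w.zip w.tail).map (fun p => s(p.1, p.2)) : List (Sym2 (Fin n)))

/-- `w` is an Eulerian trail from `s` to `t` of the edge multiset `L`: a walk from `s`
to `t` whose multiset of traversed edges is exactly `L` (with multiplicity). -/
def IsEulerianTrail (n : ℕ) (L : Multiset (Sym2 (Fin n))) (s t : Fin n)
    (w : List (Fin n)) : Prop :=
  w.head? = some s ∧ w.getLast? = some t ∧ walkEdges n w = L

open SimpleGraph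

section PathList

variable {α : Type*} (c : α → α → ℝ)

def pathCost : List α → ℝ
  | [] => 0
  | [_] => 0
  | a :: b :: l => c a b + pathCost (b :: l)

@[simp] lemma pathCost_nil : pathCost c [] = 0 := rfl

@[simp] lemma pathCost_singleton (a : α) : pathCost c [a] = 0 := rfl

@[simp] lemma pathCost_cons_cons (a b : α) (l : List α) :
    pathCost c (a :: b :: l) = c a b + pathCost c (b :: l) := rfl

lemma pathCost_append_cons_cons_cons (A B : List α) (u ℓ v : α) :
    pathCost c (A ++ u :: ℓ :: v :: B) =
      pathCost c (A ++ u :: v :: B) + (c u ℓ + c ℓ v - c u v) := by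
  induction A with
  | nil => simp only [List.nil_append, pathCost_cons_cons]; ring
  | cons a A ih =>
    cases A with
    | nil => simp only [List.cons_append, List.nil_append, pathCost_cons_cons]; ring
    | cons b A => simp only [List.cons_append, pathCost_cons_cons] at ih ⊢; rw [ih]; ring

lemma pathCost_append_pair (l : List α) (a b : α) :
    pathCost c (l ++ [a, b]) = pathCost c (l ++ [a]) + c a b := by
  induction l with
  | nil => simp
  | cons u l ih =>
    cases l with
    | nil => simp
    | cons w l => simp only [List.cons_append, pathCost_cons_cons] at ih ⊢; rw [ih]; ring

lemma pathCost_reverse (hc : ∀ u v, c u v = c v u) :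
    ∀ l : List α, pathCost c l.reverse = pathCost c l
  | [] => rfl
  | [_] => rfl
  | a :: b :: l => by
    rw [List.reverse_cons, List.reverse_cons, List.append_assoc, List.singleton_append,
      pathCost_append_pair, ← List.reverse_cons, pathCost_reverse hc (b :: l), pathCost_cons_cons,
      hc b a, add_comm]

lemma exists_eq_append_cons_cons_of_mem {l : List α} {p : α} (hp : p ∈ l)
    (hl : 2 ≤ l.length) : ∃ A u v B, l = A ++ u :: v :: B ∧ (u = p ∨ v = p) := by
  match l, hp, hl with
  | a :: b :: l, hp, _ =>
    rcases List.mem_cons.1 hp with rfl | hp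
    · exact ⟨[], p, b, l, rfl, .inl rfl⟩
    rcases List.mem_cons.1 hp with rfl | hp
    · exact ⟨[], a, p, l, rfl, .inr rfl⟩
    obtain ⟨A, u, v, B, hAB, huv⟩ :=
      exists_eq_append_cons_cons_of_mem (l := b :: l) (List.mem_cons_of_mem b hp)
        (by have := List.length_pos_of_mem hp; simp only [List.length_cons]; omega)
    exact ⟨a :: A, u, v, B, by rw [hAB]; rfl, huv⟩

lemma pathCost_cons_of_head?_eq {l : List α} {a : α} (h : l.head? = some a) (ℓ : α) :
    pathCost c (ℓ :: l) = c ℓ a + pathCost c l := by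
  cases l with
  | nil => simp at h
  | cons b l => obtain rfl := Option.some_inj.1 h; rfl

variable [DecidableEq α]

structure IsHamiltonianList (S : Finset α) (s t : α) (l : List α) : Prop where
  nodup : l.Nodup
  toFinset_eq : l.toFinset = S
  head?_eq : l.head? = some s
  getLast?_eq : l.getLast? = some t

namespace IsHamiltonianList

variable {S : Finset α} {s t : α} {l : List α}

lemma reverse (h : IsHamiltonianList S s t l) : IsHamiltonianList S t s l.reverse :=
  ⟨List.nodup_reverse.2 h.nodup, by rw [List.toFinset_reverse, h.toFinset_eq],
    by rw [List.head?_reverse, h.getLast?_eq], by rw [List.getLast?_reverse, h.head?_eq]⟩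

lemma pair (hst : s ≠ t) : IsHamiltonianList {s, t} s t [s, t] :=
  ⟨by simp [hst], by simp, rfl, rfl⟩

lemma cons {ℓ : α} (h : IsHamiltonianList S s t l) (hℓ : ℓ ∉ S) :
    IsHamiltonianList (insert ℓ S) ℓ t (ℓ :: l) := by
  obtain ⟨hnd, hS, hs, ht⟩ := h
  cases l with
  | nil => simp at hs
  | cons a l =>
    exact ⟨List.nodup_cons.2 ⟨fun h => hℓ (hS ▸ List.mem_toFinset.2 h), hnd⟩,
      by rw [List.toFinset_cons, hS], rfl, by rw [List.getLast?_cons_cons, ht]⟩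

end IsHamiltonianList

end PathList

section HamiltonianLists

variable {α : Type*} [DecidableEq α] {c : α → α → ℝ}

lemma IsHamiltonianList.exists_insert (hsymm : ∀ u v, c u v = c v u)
    (htri : ∀ u v w, c u w ≤ c u v + c v w) {S : Finset α} {s t p ℓ : α} {l : List α}
    (h : IsHamiltonianList S s t l) (hst : s ≠ t) (hp : p ∈ S) (hℓ : ℓ ∉ S) :
    ∃ l', IsHamiltonianList (insert ℓ S) s t l' ∧ pathCost c l' ≤ pathCost c l + 2 * c p ℓ := by
  have hlen : 2 ≤ l.length := by
    match l, h with
    | [], h => simpa using h.head?_eq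
    | [_], h => exact absurd ((Option.some_inj.1 h.head?_eq).symm.trans
        (Option.some_inj.1 h.getLast?_eq)) hst
    | _ :: _ :: _, _ => simp
  obtain ⟨A, u, v, B, rfl, huv⟩ :=
    exists_eq_append_cons_cons_of_mem (List.mem_toFinset.1 (h.toFinset_eq ▸ hp)) hlen
  have hperm : (A ++ u :: ℓ :: v :: B).Perm (ℓ :: (A ++ u :: v :: B)) := by
    simpa using List.perm_middle (l₁ := A ++ [u]) (a := ℓ) (l₂ := v :: B)
  have hℓl : ℓ ∉ A ++ u :: v :: B := fun h' => hℓ (h.toFinset_eq ▸ List.mem_toFinset.2 h')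
  refine ⟨A ++ u :: ℓ :: v :: B, ⟨?_, ?_, ?_, ?_⟩, ?_⟩
  · exact hperm.nodup_iff.2 (List.nodup_cons.2 ⟨hℓl, h.nodup⟩)
  · rw [List.toFinset_eq_of_perm _ _ hperm, List.toFinset_cons, h.toFinset_eq]
  · rw [← h.head?_eq]; cases A <;> rfl
  · rw [← h.getLast?_eq]; simp [List.getLast?_append]
  · rw [pathCost_append_cons_cons_cons]
    rcases huv with rfl | rfl
    · linarith [htri ℓ u v, hsymm u ℓ]
    · linarith [htri u v ℓ, hsymm v ℓ]

variable (c) in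
def HasHamiltonianLists (S : Finset α) (F : ℝ) : Prop :=
  ∀ s ∈ S, ∀ t ∈ S, s ≠ t → ∃ l, IsHamiltonianList S s t l ∧ pathCost c l + c s t ≤ F

namespace HasHamiltonianLists

variable {S : Finset α} {F : ℝ} {p ℓ : α}

lemma exists_from_leaf (hsymm : ∀ u v, c u v = c v u) (htri : ∀ u v w, c u w ≤ c u v + c v w)
    (h : HasHamiltonianLists c S F) (hF : 0 ≤ F) (hp : p ∈ S) (hℓ : ℓ ∉ S) {t : α} (ht : t ∈ S) :
    ∃ l, IsHamiltonianList (insert ℓ S) ℓ t l ∧ pathCost c l + c ℓ t ≤ F + 2 * c p ℓ := by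
  by_cases hpt : p = t
  · subst hpt
    by_cases hS : ∃ u ∈ S, u ≠ p
    · obtain ⟨u, hu, hup⟩ := hS
      obtain ⟨l, hl, hcost⟩ := h u hu p hp hup
      refine ⟨ℓ :: l, hl.cons hℓ, ?_⟩
      linarith [pathCost_cons_of_head?_eq c hl.head?_eq ℓ, htri ℓ p u, hsymm p u, hsymm p ℓ]
    · have hSp : S = {p} := eq_singleton_iff_unique_mem.2 ⟨hp, by simpa using hS⟩
      have hℓp : ℓ ≠ p := by rintro rfl; exact hℓ hp
      refine ⟨[ℓ, p], by simpa [hSp] using IsHamiltonianList.pair hℓp, ?_⟩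
      simp only [pathCost_cons_cons, pathCost_singleton]
      linarith [hsymm p ℓ]
  · obtain ⟨l, hl, hcost⟩ := h p hp t ht hpt
    refine ⟨ℓ :: l, hl.cons hℓ, ?_⟩
    linarith [pathCost_cons_of_head?_eq c hl.head?_eq ℓ, htri ℓ p t, hsymm p ℓ]

lemma attach (hsymm : ∀ u v, c u v = c v u) (htri : ∀ u v w, c u w ≤ c u v + c v w)
    (h : HasHamiltonianLists c S F) (hF : 0 ≤ F) (hp : p ∈ S) (hℓ : ℓ ∉ S) :
    HasHamiltonianLists c (insert ℓ S) (F + 2 * c p ℓ) := by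
  intro s hs t ht hst
  rcases mem_insert.1 hs with rfl | hs
  · have ht : t ∈ S := (mem_insert.1 ht).resolve_left hst.symm
    exact h.exists_from_leaf hsymm htri hF hp hℓ ht
  rcases mem_insert.1 ht with rfl | ht
  · have hs : s ∈ S := (mem_insert.1 hs).resolve_left hst
    obtain ⟨l, hl, hcost⟩ := h.exists_from_leaf hsymm htri hF hp hℓ hs
    exact ⟨l.reverse, hl.reverse, by rw [pathCost_reverse c hsymm, hsymm]; exact hcost⟩
  obtain ⟨l, hl, hcost⟩ := h s hs t ht hst
  obtain ⟨l', hl', hcost'⟩ := hl.exists_insert hsymm htri hst hp hℓ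
  exact ⟨l', hl', by linarith⟩

end HasHamiltonianLists

end HamiltonianLists

section GrownTree

variable {α : Type*} [DecidableEq α]

inductive GrownTree : Finset α → Finset (Sym2 α) → Prop
  | single (v : α) : GrownTree {v} ∅
  | attach {S : Finset α} {T : Finset (Sym2 α)} (p ℓ : α) :
      GrownTree S T → p ∈ S → ℓ ∉ S → GrownTree (insert ℓ S) (insert s(p, ℓ) T)

namespace GrownTree

variable {S : Finset α} {T : Finset (Sym2 α)}

lemma mem_of_mem_edge (h : GrownTree S T) {e : Sym2 α} (he : e ∈ T) {v : α} (hv : v ∈ e) :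
    v ∈ S := by
  induction h with
  | single => simp at he
  | attach p ℓ _ hp _ ih =>
    rcases mem_insert.1 he with rfl | he
    · rcases Sym2.mem_iff.1 hv with rfl | rfl
      · exact mem_insert_of_mem hp
      · exact mem_insert_self _ _
    · exact mem_insert_of_mem (ih he)

lemma nonempty (h : GrownTree S T) : S.Nonempty := by
  cases h with
  | single v => exact singleton_nonempty v
  | attach p ℓ => exact insert_nonempty _ _

lemma exists_univ_of_preconnected [Fintype α] {T₀ : Finset (Sym2 α)}
    (hconn : (fromEdgeSet (T₀ : Set (Sym2 α))).Preconnected)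
    {S : Finset α} {T : Finset (Sym2 α)} (h : GrownTree S T) (hT : T ⊆ T₀) :
    ∃ T' ⊆ T₀, GrownTree univ T' := by
  by_cases hS : S = univ
  · exact ⟨T, hT, hS ▸ h⟩
  obtain ⟨v, hv⟩ : ∃ v, v ∉ S := by simpa [eq_univ_iff_forall] using hS
  obtain ⟨u, hu⟩ := h.nonempty
  obtain ⟨d, -, hd, hd'⟩ := (hconn u v).some.exists_boundary_dart S hu hv
  have hdT₀ : s(d.fst, d.snd) ∈ T₀ := by
    simpa using (fromEdgeSet_adj _).1 d.adj |>.1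
  exact (h.attach _ _ hd hd').exists_univ_of_preconnected hconn (insert_subset hdT₀ hT)
termination_by Fintype.card α - S.card
decreasing_by
  have := card_lt_univ_of_notMem hv
  rw [card_insert_of_notMem hd']
  omega

end GrownTree

end GrownTree

section Walks

variable {α : Type*}

lemma exists_walk_support_eq (g : Sym2 α → ℝ) :
    ∀ (l : List α) {a b : α}, l.Nodup → l.head? = some a → l.getLast? = some b →
      ∃ p : (⊤ : SimpleGraph α).Walk a b,
        p.support = l ∧ (p.edges.map g).sum = pathCost (fun u v => g s(u, v)) l
  | [], _, _, _, ha, _ => by simp at ha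
  | [v], _, _, _, ha, hb => by
    obtain rfl := Option.some_inj.1 ha
    obtain rfl := Option.some_inj.1 hb
    exact ⟨.nil, rfl, rfl⟩
  | v :: w :: l, _, _, hnd, ha, hb => by
    obtain rfl := Option.some_inj.1 ha
    have hvw : v ≠ w := fun h => (List.nodup_cons.1 hnd).1 (h ▸ List.mem_cons_self)
    obtain ⟨p, hp, hcost⟩ := exists_walk_support_eq g (w :: l) (List.nodup_cons.1 hnd).2 rfl
      (by rwa [List.getLast?_cons_cons] at hb)
    refine ⟨.cons (by simpa using hvw) p, by simp [hp], ?_⟩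
    rw [Walk.edges_cons, List.map_cons, List.sum_cons, hcost, pathCost_cons_cons]

end Walks

variable {n : ℕ}

lemma ecost_mk {c : Fin n → Fin n → ℝ} (hsymm : ∀ u v, c u v = c v u) (u v : Fin n) :
    ecost n c s(u, v) = c u v := by
  simp only [ecost, Sym2.lift_mk, hsymm v u, add_self_div_two]

lemma ecost_nonneg {c : Fin n → Fin n → ℝ} (hc : ∀ u v, 0 ≤ c u v) (e : Sym2 (Fin n)) :
    0 ≤ ecost n c e := by
  induction e using Sym2.ind with
  | _ u v => simp only [ecost, Sym2.lift_mk]; linarith [hc u v, hc v u]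

lemma fcost_nonneg {c : Fin n → Fin n → ℝ} (hc : ∀ u v, 0 ≤ c u v) (T : Finset (Sym2 (Fin n))) :
    0 ≤ fcost n c T :=
  sum_nonneg fun e _ => ecost_nonneg hc e

lemma existsHamPath_of_isHamiltonianList {c : Fin n → Fin n → ℝ} (hsymm : ∀ u v, c u v = c v u)
    {s t : Fin n} {l : List (Fin n)} (h : IsHamiltonianList univ s t l) :
    ExistsHamPath n s t c (pathCost c l) := by
  obtain ⟨p, hp, hcost⟩ := exists_walk_support_eq (ecost n c) l h.nodup h.head?_eq h.getLast?_eq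
  refine ⟨p, fun v => ?_, ?_⟩
  · rw [hp]
    exact List.count_eq_one_of_mem h.nodup
      (List.mem_toFinset.1 (h.toFinset_eq ▸ mem_univ v))
  · simp only [hcost, ecost_mk hsymm, le_refl]

lemma GrownTree.hasHamiltonianLists {c : Fin n → Fin n → ℝ} (hc : IsMetric n c)
    {S : Finset (Fin n)} {T : Finset (Sym2 (Fin n))} (h : GrownTree S T) :
    HasHamiltonianLists c S (2 * fcost n c T) := by
  obtain ⟨hnonneg, hsymm, -, htri⟩ := hc
  induction h with
  | single v =>
    intro s hs t ht hst
    exact absurd ((mem_singleton.1 hs).trans (mem_singleton.1 ht).symm) hst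
  | @attach S T p ℓ hT hp hℓ ih =>
    have hnew : s(p, ℓ) ∉ T := fun h => hℓ (hT.mem_of_mem_edge h (Sym2.mem_mk_right p ℓ))
    rw [fcost, sum_insert hnew, ecost_mk hsymm, ← fcost, mul_add, add_comm]
    exact ih.attach hsymm htri (by linarith [fcost_nonneg hnonneg T]) hp hℓ

lemma ExistsHamPath.mono {s t : Fin n} {c : Fin n → Fin n → ℝ} {B B' : ℝ}
    (h : ExistsHamPath n s t c B) (hB : B ≤ B') : ExistsHamPath n s t c B' :=
  let ⟨p, hp, hcost⟩ := h
  ⟨p, hp, hcost.trans hB⟩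

lemma existsHamPath_of_preconnected {c : Fin n → Fin n → ℝ} (hc : IsMetric n c)
    {T : Finset (Sym2 (Fin n))} (hT : (fromEdgeSet (T : Set (Sym2 (Fin n)))).Preconnected)
    {s t : Fin n} (hst : s ≠ t) :
    ExistsHamPath n s t c (2 * fcost n c T - c s t) := by
  obtain ⟨T', hT'T, hT'⟩ := (GrownTree.single s).exists_univ_of_preconnected hT (empty_subset T)
  obtain ⟨l, hl, hcost⟩ := hT'.hasHamiltonianLists hc s (mem_univ s) t (mem_univ t) hst
  have hT'le : fcost n c T' ≤ fcost n c T :=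
    sum_le_sum_of_subset_of_nonneg hT'T fun e _ _ => ecost_nonneg hc.1 e
  exact (existsHamPath_of_isHamiltonianList hc.2.1 hl).mono (by linarith)

section EdgeSets

@[simp] lemma mk_mem_Edges {u v : Fin n} : s(u, v) ∈ Edges n ↔ u ≠ v := by
  simp [Edges]

lemma mk_mem_inSet {u v : Fin n} (huv : u ≠ v) {B : Finset (Fin n)} :
    s(u, v) ∈ inSet n B ↔ u ∈ B ∧ v ∈ B := by
  simp [inSet, huv]

lemma mk_mem_cutSet {u v : Fin n} (huv : u ≠ v) {B : Finset (Fin n)} :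
    s(u, v) ∈ cutSet n B ↔ (u ∈ B ∧ v ∉ B) ∨ (v ∈ B ∧ u ∉ B) := by
  simp only [cutSet, mem_filter, mk_mem_Edges, huv, ne_eq, not_false_eq_true, true_and]
  constructor
  · rintro ⟨a, b, hab, ha, hb⟩
    rcases Sym2.eq_iff.1 hab with ⟨rfl, rfl⟩ | ⟨rfl, rfl⟩
    exacts [.inl ⟨ha, hb⟩, .inr ⟨ha, hb⟩]
  · rintro (⟨hu, hv⟩ | ⟨hv, hu⟩)
    exacts [⟨u, v, rfl, hu, hv⟩, ⟨v, u, Sym2.eq_swap, hv, hu⟩]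

lemma cutSet_singleton (v : Fin n) : cutSet n {v} = (Edges n).filter (v ∈ ·) := by
  ext e
  induction e using Sym2.ind with
  | _ a b =>
    by_cases hab : a = b
    · simp [cutSet, hab]
    · rw [mk_mem_cutSet hab, mem_filter, mk_mem_Edges]
      aesop

/-- Counting the endpoints in `B` of each edge. -/
lemma sum_sum_cutSet_singleton (x : Sym2 (Fin n) → ℝ) (B : Finset (Fin n)) :
    ∑ v ∈ B, ∑ e ∈ cutSet n {v}, x e =
      2 * ∑ e ∈ inSet n B, x e + ∑ e ∈ cutSet n B, x e := by
  have hin : inSet n B ⊆ Edges n := filter_subset _ _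
  have hcut : cutSet n B ⊆ Edges n := filter_subset _ _
  simp_rw [cutSet_singleton, sum_filter]
  rw [sum_comm, ← inter_eq_right.2 hin, ← inter_eq_right.2 hcut,
    ← sum_ite_mem, ← sum_ite_mem, mul_sum, ← sum_add_distrib]
  refine sum_congr rfl fun e he => ?_
  induction e using Sym2.ind with
  | _ a b =>
    have hab : a ≠ b := mk_mem_Edges.1 he
    have hsplit : ∀ v, (if v ∈ s(a, b) then x s(a, b) else 0) =
        (if v = a then x s(a, b) else 0) + (if v = b then x s(a, b) else 0) := by
      intro v
      by_cases hva : v = a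
      · subst hva; simp [hab]
      · by_cases hvb : v = b <;> simp [hva, hvb, Ne.symm hab]
    simp_rw [hsplit, sum_add_distrib, sum_ite_eq', mk_mem_inSet hab,
      mk_mem_cutSet hab]
    by_cases ha : a ∈ B <;> by_cases hb : b ∈ B <;> simp [ha, hb, two_mul]

lemma inSet_univ : inSet n univ = Edges n := by
  ext e
  simp [inSet]

lemma cutSet_univ : cutSet n univ = ∅ := by
  ext e
  simp [cutSet]

end EdgeSets

namespace HKPathFeasible

variable {s t : Fin n} {x : Sym2 (Fin n) → ℝ}

lemma sum_degree_eq (hx : HKPathFeasible n s t x) (hst : s ≠ t) (B : Finset (Fin n)) :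
    ∑ v ∈ B, ∑ e ∈ cutSet n {v}, x e =
      2 * B.card - (if s ∈ B then 1 else 0) - (if t ∈ B then 1 else 0) := by
  obtain ⟨-, hxs, hxt, hxv, -, -⟩ := hx
  have hdeg : ∀ v, ∑ e ∈ cutSet n {v}, x e =
      2 - (if v = s then 1 else 0) - (if v = t then 1 else 0) := by
    intro v
    by_cases hvs : v = s
    · subst hvs; simp [hxs, hst]; norm_num
    by_cases hvt : v = t
    · subst hvt; simp [hxt, hvs]; norm_num
    simp [hxv v hvs hvt, hvs, hvt]
  simp_rw [hdeg, sum_sub_distrib, sum_ite_eq', sum_const, nsmul_eq_mul, mul_comm]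

lemma sum_edges (hx : HKPathFeasible n s t x) (hst : s ≠ t) :
    ∑ e ∈ Edges n, x e = n - 1 := by
  have h := sum_sum_cutSet_singleton x univ
  rw [hx.sum_degree_eq hst, cutSet_univ, inSet_univ] at h
  simp only [mem_univ, if_true, card_univ, Fintype.card_fin, sum_empty] at h
  linarith

lemma sum_inSet_le (hx : HKPathFeasible n s t x) (hst : s ≠ t) {B : Finset (Fin n)}
    (hB : B.Nonempty) : ∑ e ∈ inSet n B, x e ≤ B.card - 1 := by
  by_cases hBu : B = univ
  · rw [hBu, inSet_univ, hx.sum_edges hst, card_univ, Fintype.card_fin]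
  have h := sum_sum_cutSet_singleton x B
  rw [hx.sum_degree_eq hst] at h
  obtain ⟨-, -, -, -, hcut_sep, hcut_nonsep⟩ := hx
  by_cases hsep : (s ∈ B ∧ t ∉ B) ∨ (s ∉ B ∧ t ∈ B)
  · have hcut := hcut_sep B hB hBu hsep
    rcases hsep with ⟨hs, ht⟩ | ⟨hs, ht⟩ <;> simp only [hs, ht, if_true, if_false] at h <;> linarith
  · have hcut := hcut_nonsep B hB hBu hsep
    split_ifs at h <;> linarith

end HKPathFeasible

/-- The subtour inequalities of the fibres of `f`, added up. -/
lemma sum_le_card_sub_card_image {β : Type*} [DecidableEq β] {x : Sym2 (Fin n) → ℝ}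
    (hx0 : ∀ e, 0 ≤ x e)
    (hsub : ∀ B : Finset (Fin n), B.Nonempty → ∑ e ∈ inSet n B, x e ≤ B.card - 1)
    {P : Finset (Sym2 (Fin n))} (hP : P ⊆ Edges n) (f : Fin n → β)
    (hf : ∀ u v, s(u, v) ∈ P → f u = f v) :
    ∑ e ∈ P, x e ≤ n - (univ.image f).card := by
  set fiber : β → Finset (Fin n) := fun i => univ.filter (f · = i)
  have hPsub : P ⊆ (univ.image f).biUnion (fun i => inSet n (fiber i)) := by
    intro e he
    induction e using Sym2.ind with
    | _ u v =>
      refine mem_biUnion.2 ⟨f u, mem_image_of_mem f (mem_univ u), ?_⟩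
      rw [mk_mem_inSet (mk_mem_Edges.1 (hP he))]
      simp [fiber, hf u v he]
  have hdisj : (↑(univ.image f) : Set β).PairwiseDisjoint (fun i => inSet n (fiber i)) := by
    intro i _ j _ hij
    refine disjoint_left.2 fun e hei hej => ?_
    induction e using Sym2.ind with
    | _ u v =>
      have hi := (mem_filter.1 hei).2 u (Sym2.mem_mk_left u v)
      have hj := (mem_filter.1 hej).2 u (Sym2.mem_mk_left u v)
      simp only [fiber, mem_filter, mem_univ, true_and] at hi hj
      exact hij (hi.symm.trans hj)
  calc ∑ e ∈ P, x e
      ≤ ∑ e ∈ (univ.image f).biUnion (fun i => inSet n (fiber i)), x e :=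
        sum_le_sum_of_subset_of_nonneg hPsub fun e _ _ => hx0 e
    _ = ∑ i ∈ univ.image f, ∑ e ∈ inSet n (fiber i), x e := sum_biUnion hdisj
    _ ≤ ∑ i ∈ univ.image f, (((fiber i).card : ℝ) - 1) := by
        refine sum_le_sum fun i hi => hsub _ ?_
        obtain ⟨v, -, rfl⟩ := mem_image.1 hi
        exact ⟨v, by simp [fiber]⟩
    _ = n - (univ.image f).card := by
        rw [sum_sub_distrib, ← Nat.cast_sum, ← card_eq_sum_card_image]
        simp

/-- The state of Kruskal's algorithm after scanning the edges `P`: the forest `T ⊆ P` built so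
far, with `f` labelling its components, which are the components of `P` as well. -/
structure KruskalState (P T : Finset (Sym2 (Fin n))) (f : Fin n → Fin n) : Prop where
  subset : T ⊆ P
  card_add_card_image : T.card + (univ.image f).card = n
  label_eq : ∀ u v, s(u, v) ∈ P → f u = f v
  reachable : ∀ u v, f u = f v →
    (fromEdgeSet (T : Set (Sym2 (Fin n)))).Reachable u v

namespace KruskalState

variable {P T : Finset (Sym2 (Fin n))} {f : Fin n → Fin n}

lemma empty : KruskalState (n := n) ∅ ∅ id where
  subset := subset_refl _
  card_add_card_image := by simp
  label_eq := by simp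
  reachable u v h := by
    obtain rfl : u = v := h
    rfl

lemma insert_of_label_eq (h : KruskalState P T f) {a b : Fin n} (hab : f a = f b) :
    KruskalState (insert s(a, b) P) T f where
  subset := h.subset.trans (subset_insert _ _)
  card_add_card_image := h.card_add_card_image
  label_eq u v huv := by
    rcases mem_insert.1 huv with huv | huv
    · rcases Sym2.eq_iff.1 huv with ⟨rfl, rfl⟩ | ⟨rfl, rfl⟩
      exacts [hab, hab.symm]
    · exact h.label_eq u v huv
  reachable := h.reachable

lemma insert_of_label_ne (h : KruskalState P T f) {a b : Fin n} (hab : f a ≠ f b)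
    (he : s(a, b) ∉ P) :
    KruskalState (insert s(a, b) P) (insert s(a, b) T)
      (fun v => if f v = f b then f a else f v) where
  subset := insert_subset_insert _ h.subset
  card_add_card_image := by
    have himage : univ.image (fun v => if f v = f b then f a else f v) =
        (univ.image f).erase (f b) := by
      ext i
      simp only [mem_image, mem_univ, true_and, mem_erase]
      constructor
      · rintro ⟨v, rfl⟩
        split_ifs with hv
        exacts [⟨hab, a, rfl⟩, ⟨hv, v, rfl⟩]
      · rintro ⟨hi, v, rfl⟩
        exact ⟨v, if_neg hi⟩
    have hpos : 0 < (univ.image f).card := by simp [card_pos, univ_nonempty_iff.2 ⟨a⟩]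
    rw [himage, card_insert_of_notMem (fun h' => he (h.subset h')),
      card_erase_of_mem (mem_image_of_mem f (mem_univ b))]
    have := h.card_add_card_image
    omega
  label_eq u v huv := by
    rcases mem_insert.1 huv with huv | huv
    · rcases Sym2.eq_iff.1 huv with ⟨rfl, rfl⟩ | ⟨rfl, rfl⟩ <;> simp [hab]
    · simp [h.label_eq u v huv]
  reachable u v huv := by
    have hmono : ∀ {u v}, (fromEdgeSet (T : Set (Sym2 (Fin n)))).Reachable u v →
        (fromEdgeSet ((insert s(a, b) T : Finset _) : Set (Sym2 (Fin n)))).Reachable u v :=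
      fun huv => huv.mono (fromEdgeSet_mono (by simp))
    have hba : (fromEdgeSet ((insert s(a, b) T : Finset _) : Set (Sym2 (Fin n)))).Reachable b a :=
      (Adj.reachable (by simpa using fun h' : a = b => hab (h' ▸ rfl))).symm
    split_ifs at huv with hu hv hv
    · exact hmono (h.reachable u v (hu.trans hv.symm))
    · exact (hmono (h.reachable u b hu)).trans (hba.trans (hmono (h.reachable a v huv)))
    · exact (hmono (h.reachable u a huv)).trans (hba.symm.trans (hmono (h.reachable b v hv.symm)))
    · exact hmono (h.reachable u v huv)

lemma sum_le_card (h : KruskalState P T f) {x : Sym2 (Fin n) → ℝ} (hx0 : ∀ e, 0 ≤ x e)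
    (hsub : ∀ B : Finset (Fin n), B.Nonempty → ∑ e ∈ inSet n B, x e ≤ B.card - 1)
    (hP : P ⊆ Edges n) : ∑ e ∈ P, x e ≤ T.card := by
  have := sum_le_card_sub_card_image hx0 hsub hP f h.label_eq
  have hcard : (T.card : ℝ) + (univ.image f).card = n := by exact_mod_cast h.card_add_card_image
  linarith

end KruskalState

/-- Kruskal's algorithm, scanning the edges in order of increasing cost. Since `x(P) ≤ |T|` at
every stage, summation by parts over the cost thresholds gives the cost invariant. -/
lemma exists_kruskalState (c : Fin n → Fin n → ℝ) {x : Sym2 (Fin n) → ℝ} (hx0 : ∀ e, 0 ≤ x e)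
    (hsub : ∀ B : Finset (Fin n), B.Nonempty → ∑ e ∈ inSet n B, x e ≤ B.card - 1)
    (P : Finset (Sym2 (Fin n))) (hP : P ⊆ Edges n) :
    ∃ T f, KruskalState P T f ∧ ∀ γ, (∀ e ∈ P, ecost n c e ≤ γ) →
      fcost n c T + γ * ∑ e ∈ P, x e ≤ ∑ e ∈ P, x e * ecost n c e + γ * T.card := by
  induction P using induction_on_max_value (ecost n c) with
  | empty => exact ⟨∅, id, .empty, fun γ _ => by simp [fcost]⟩
  | insert e P he hmax ih =>
    obtain ⟨T, f, hT, hcost⟩ := ih ((subset_insert e P).trans hP)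
    induction e using Sym2.ind with
    | _ a b =>
      obtain ⟨T', f', hT', hshift⟩ : ∃ T' f', KruskalState (insert s(a, b) P) T' f' ∧
          fcost n c T' - ecost n c s(a, b) * T'.card =
            fcost n c T - ecost n c s(a, b) * T.card := by
        by_cases hab : f a = f b
        · exact ⟨T, f, hT.insert_of_label_eq hab, rfl⟩
        · refine ⟨_, _, hT.insert_of_label_ne hab he, ?_⟩
          have heT : s(a, b) ∉ T := fun h => he (hT.subset h)
          rw [fcost, sum_insert heT, ← fcost, card_insert_of_notMem heT]
          push_cast
          ring
      refine ⟨T', f', hT', fun γ hγ => ?_⟩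
      have hlow := hcost _ hmax
      have hslack := hT'.sum_le_card hx0 hsub hP
      have hγe : ecost n c s(a, b) ≤ γ := hγ _ (mem_insert_self _ _)
      simp only [sum_insert he] at hslack ⊢
      linarith [mul_le_mul_of_nonneg_right hγe (sub_nonneg.2 hslack)]

lemma exists_preconnected_fcost_le_xcost [NeZero n] (c : Fin n → Fin n → ℝ)
    {x : Sym2 (Fin n) → ℝ} (hx0 : ∀ e, 0 ≤ x e)
    (hsub : ∀ B : Finset (Fin n), B.Nonempty → ∑ e ∈ inSet n B, x e ≤ B.card - 1)
    (hE : ∑ e ∈ Edges n, x e = n - 1) :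
    ∃ T : Finset (Sym2 (Fin n)),
      (fromEdgeSet (T : Set (Sym2 (Fin n)))).Preconnected ∧ fcost n c T ≤ xcost n c x := by
  obtain ⟨T, f, hT, hcost⟩ := exists_kruskalState c hx0 hsub (Edges n) subset_rfl
  have hlabel : ∀ u v, f u = f v := by
    intro u v
    by_cases huv : u = v
    · rw [huv]
    · exact hT.label_eq u v (mk_mem_Edges.2 huv)
  have himage : (univ.image f).card = 1 :=
    card_eq_one.2 ⟨f 0, by ext i; simp [hlabel _ 0, eq_comm]⟩
  have hcard : (T.card : ℝ) = n - 1 := by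
    have : (T.card : ℝ) + 1 = n := by exact_mod_cast himage ▸ hT.card_add_card_image
    linarith
  obtain ⟨γ, hγ⟩ := ((Edges n).image (ecost n c)).exists_le
  refine ⟨T, fun u v => hT.reachable u v (hlabel u v), ?_⟩
  have := hcost γ fun e he => hγ _ (mem_image_of_mem _ he)
  rw [hE, hcard] at this
  rw [xcost]
  linarith

theorem case_B_large_general (n : ℕ) (s t : Fin n) (hst : s ≠ t)
    (c : Fin n → Fin n → ℝ) (hc : IsMetric n c)
    (σ : ℝ)
    (x : Sym2 (Fin n) → ℝ) (hx : HKPathFeasible n s t x)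
    (hfar : (1 / 3 + σ) * xcost n c x ≤ c s t) :
    ExistsHamPath n s t c ((5 / 3 - σ) * xcost n c x) := by
  have : NeZero n := NeZero.of_pos s.pos
  obtain ⟨T, hT, hTx⟩ := exists_preconnected_fcost_le_xcost c hx.1
    (fun _ hB => hx.sum_inSet_le hst hB) (hx.sum_edges hst)
  exact (existsHamPath_of_preconnected hc hT hst).mono (by linarith)

/-- (Case B, large endpoint distance.) If `c(s,t) ≥ (1/3 + σ)·c(x)`
for some `σ > 0`, then there is a Hamiltonian `s`–`t` path of cost at most
`(5/3 − σ)·c(x)`. -/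
theorem case_B_large (n : ℕ) (hn : 2 ≤ n) (s t : Fin n) (hst : s ≠ t)
    (c : Fin n → Fin n → ℝ) (hc : IsMetric n c)
    (σ : ℝ) (hσ : 0 < σ)
    (x : Sym2 (Fin n) → ℝ) (hx : HKPathFeasible n s t x)
    (hfar : (1 / 3 + σ) * xcost n c x ≤ c s t) :
    ExistsHamPath n s t c ((5 / 3 - σ) * xcost n c x) :=
  case_B_large_general n s t hst c hc σ x hx hfar

end
end TSPPath
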